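/- arXiv:2010.12113 — 2 statements merged into one kernel-verified Lean document; each statement's English description precedes it below -/
import Mathlib

section
/- Let k < j − 1 be integers (so k + 1 < j) and let ζ_n ∈ ℝ for k ≤ n ≤ j. Suppose real numbers ν_{k,j}, ν_{k+1,j}, ν_{k,j-1}, ν_{k+1,j-1}, ν_{k,k}, ν_{j,j} satisfy: ν_{k,k} = 1 − ζ_k; ν_{j,j} = 1 − ζ_j; ν_{k,j} ≥ ν_{k,j-1} + ν_{k+1,j} − ν_{k+1,j-1}; ν_{k,j} ≤ ν_{k+1,j}; ν_{k,j} ≤ ν_{k,j-1}; ν_{k,j-1} ≥ ν_{k+1,j-1} + ν_{k,k} − 1; ν_{k+1,j} ≥ ν_{k+1,j-1} + ν_{j,j} − 1; ν_{k+1,j-1} ≥ 1 − Σ_{n=k+1}^{j-1} ζ_n; ν_{k,j} ≥ 0; ν_{k,j-1} ≥ 0; ν_{k,j-1} ≤ 1 − ζ_k; ν_{k+1,j} ≤ 1 − ζ_j; and ν_{k+1,j-1} ≤ 1 − ζ_n for every k + 1 ≤ n ≤ j − 1. Define τ = ν_{k+1,j-1} − ν_{k,j-1} − ν_{k+1,j}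 + ν_{k,j}. Then: τ ≥ 0; τ ≥ ζ_k − Σ_{n=k+1}^{j-1} ζ_n + ζ_j − 1; τ ≤ ζ_k; τ ≤ 1 − ζ_n for every k + 1 ≤ n ≤ j − 1; and τ ≤ ζ_j. -/
/-!
Write `a = ν_{k+1,j-1}`, `b = ν_{k,j-1}`, `c = ν_{k+1,j}`, `d = ν_{k,j}`, so that
`τ = a - b - c + d` is the inclusion–exclusion combination of the four linearizations.
Each hull inequality for `τ` is the sum of two to four McCormick inequalities: `τ ≥ 0` is the
supermodularity inequality itself, the upper bounds pair the inequality that peels off the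
end factor (`ζ_k` or `ζ_j`) or `0 ≤ b` with a monotonicity inequality `d ≤ c` or `d ≤ b`,
and the lower bound adds the four box-type bounds on `a`, `b`, `c`, `d`.
-/

section McCormick

variable {α : Type*} [Field α] [LinearOrder α] [IsStrictOrderedRing α] {a b c d : α}

theorem sub_sub_add_nonneg_of_add_sub_le (h : b + c - a ≤ d) : 0 ≤ a - b - c + d := by
  linarith

theorem sub_sub_add_le_one_sub {e : α} (hpeel : a + e - 1 ≤ b) (hmono : d ≤ c) :
    a - b - c + d ≤ 1 - e := by
  linarith

theorem sub_sub_add_le_of_nonneg (hb : 0 ≤ b) (hmono : d ≤ c) : a - b - c + d ≤ a := by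
  linarith

theorem le_sub_sub_add_of_bounds {s x y : α} (ha : 1 - s ≤ a) (hb : b ≤ 1 - x)
    (hc : c ≤ 1 - y) (hd : 0 ≤ d) : x - s + y - 1 ≤ a - b - c + d := by
  linarith

end McCormick

theorem stmt17_general (k j : ℕ) (ζ : ℕ → ℝ)
    (νkj νk1j νkj1 νk1j1 νkk νjj : ℝ)
    (h1 : νkk = 1 - ζ k) (h2 : νjj = 1 - ζ j)
    (h3 : νkj1 + νk1j - νk1j1 ≤ νkj)
    (h4 : νkj ≤ νk1j) (h5 : νkj ≤ νkj1)
    (h6 : νk1j1 + νkk - 1 ≤ νkj1)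
    (h7 : νk1j1 + νjj - 1 ≤ νk1j)
    (h8 : 1 - ∑ m ∈ Finset.Ioo k j, ζ m ≤ νk1j1)
    (h9 : 0 ≤ νkj) (h10 : 0 ≤ νkj1)
    (h11 : νkj1 ≤ 1 - ζ k) (h12 : νk1j ≤ 1 - ζ j)
    (h13 : ∀ m, k + 1 ≤ m → m ≤ j - 1 → νk1j1 ≤ 1 - ζ m) :
    0 ≤ νk1j1 - νkj1 - νk1j + νkj ∧
    ζ k - (∑ m ∈ Finset.Ioo k j, ζ m) + ζ j - 1 ≤ νk1j1 - νkj1 - νk1j + νkj ∧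
    νk1j1 - νkj1 - νk1j + νkj ≤ ζ k ∧
    (∀ m, k + 1 ≤ m → m ≤ j - 1 → νk1j1 - νkj1 - νk1j + νkj ≤ 1 - ζ m) ∧
    νk1j1 - νkj1 - νk1j + νkj ≤ ζ j := by
  subst h1 h2
  refine ⟨sub_sub_add_nonneg_of_add_sub_le h3, le_sub_sub_add_of_bounds h8 h11 h12 h9,
    ?_, fun m hm₁ hm₂ => (sub_sub_add_le_of_nonneg h10 h4).trans (h13 m hm₁ hm₂), ?_⟩
  · simpa only [sub_sub_cancel] using sub_sub_add_le_one_sub h6 h4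
  · rw [sub_right_comm]
    simpa only [sub_sub_cancel] using sub_sub_add_le_one_sub h7 h5

/-- Remark 3 of the paper: the McCormick-type inequalities (eq:mccor) on the
linearization variables `ν` imply the convex-hull inequalities over the unit box for
the linearization `τ = ν_{k+1,j-1} − ν_{k,j-1} − ν_{k+1,j} + ν_{k,j}` of the monomial
`ζ_k·(1 − ζ_{k+1})⋯(1 − ζ_{j-1})·ζ_j` (case `k + 1 < j`). -/
theorem stmt17 (k j : ℕ) (hkj : k + 1 < j) (ζ : ℕ → ℝ)
    (νkj νk1j νkj1 νk1j1 νkk νjj : ℝ)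
    (h1 : νkk = 1 - ζ k) (h2 : νjj = 1 - ζ j)
    (h3 : νkj1 + νk1j - νk1j1 ≤ νkj)
    (h4 : νkj ≤ νk1j) (h5 : νkj ≤ νkj1)
    (h6 : νk1j1 + νkk - 1 ≤ νkj1)
    (h7 : νk1j1 + νjj - 1 ≤ νk1j)
    (h8 : 1 - ∑ m ∈ Finset.Ioo k j, ζ m ≤ νk1j1)
    (h9 : 0 ≤ νkj) (h10 : 0 ≤ νkj1)
    (h11 : νkj1 ≤ 1 - ζ k) (h12 : νk1j ≤ 1 - ζ j)
    (h13 : ∀ m, k + 1 ≤ m → m ≤ j - 1 → νk1j1 ≤ 1 - ζ m) :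
    0 ≤ νk1j1 - νkj1 - νk1j + νkj ∧
    ζ k - (∑ m ∈ Finset.Ioo k j, ζ m) + ζ j - 1 ≤ νk1j1 - νkj1 - νk1j + νkj ∧
    νk1j1 - νkj1 - νk1j + νkj ≤ ζ k ∧
    (∀ m, k + 1 ≤ m → m ≤ j - 1 → νk1j1 - νkj1 - νk1j + νkj ≤ 1 - ζ m) ∧
    νk1j1 - νkj1 - νk1j + νkj ≤ ζ j :=
  stmt17_general k j ζ νkj νk1j νkj1 νk1j1 νkk νjj h1 h2 h3 h4 h5 h6 h7 h8 h9 h10 h11 h12 h13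
end

section
/- Let θ^lo, α1, F1, H1^up be reals with F1 > 0, H1^up > 0 and θ^lo ≤ α1 − F1/H1^up. Define S = {(f, θ, H, u) ∈ ℝ^4 : f = F1, θ^lo ≤ θ ≤ α1 − F1/H1^up, H = F1/(α1 − θ), u = F1·θ}. Then the convex hull of S equals {(f, θ, H, u) ∈ ℝ^4 : f = F1, u = F1·θ, θ^lo ≤ θ ≤ α1 − F1/H1^up, F1/(α1 − θ) ≤ H ≤ F1/(α1 − θ^lo) + H1^up·(θ − θ^lo)/(α1 − θ^lo)}. -/
/-!
The slice is the image, under the affine map `(θ, H) ↦ (F1, θ, H, F1 θ)`, of the graph of the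
convex function `g θ = F1 / (α1 − θ)` over `[θlo, θhi]`, `θhi = α1 − F1 / H1up`, and convex hulls commute with affine
maps. For a function convex on an interval, the hull of its graph is the region between the graph
and its secant: that region is convex (the epigraph cut by a half-plane), and each of its points
lies on a vertical segment from the graph up to the secant, whose upper end lies on the segment
joining the two endpoints of the graph. Since `g θhi = H1up`, the secant of `g` has slope
`H1up / (α1 − θlo)`.
-/

open Set

lemma convexOn_div_sub {c : ℝ} (hc : 0 ≤ c) (a : ℝ) :
    ConvexOn ℝ (Iio a) fun t => c / (a - t) := by
  have h := ((convexOn_zpow (𝕜 := ℝ) (-1)).comp_affineMap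
    (AffineMap.const ℝ ℝ a - AffineMap.id ℝ ℝ)).smul hc
  have hdom : (AffineMap.const ℝ ℝ a - AffineMap.id ℝ ℝ) ⁻¹' Ioi 0 = Iio a := by ext; simp
  rw [hdom] at h
  exact h.congr fun t _ => by simp [div_eq_mul_inv]

lemma convex_setOf_snd_le_affine (c m x₀ : ℝ) :
    Convex ℝ {p : ℝ × ℝ | p.2 ≤ c + m * (p.1 - x₀)} := by
  intro p hp q hq a b ha hb hab
  have hpa := mul_le_mul_of_nonneg_left hp ha
  have hqb := mul_le_mul_of_nonneg_left hq hb
  simp only [mem_ofPred_eq, Prod.fst_add, Prod.snd_add, Prod.smul_fst, Prod.smul_snd,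
    smul_eq_mul]
  linear_combination hpa + hqb + (c - m * x₀) * hab

lemma mk_secant_mem_segment {g : ℝ → ℝ} {lo hi m t : ℝ} (hm : g hi = g lo + m * (hi - lo))
    (ht : t ∈ Icc lo hi) :
    (t, g lo + m * (t - lo)) ∈ segment ℝ (lo, g lo) (hi, g hi) := by
  obtain ⟨a, b, ha, hb, hab, rfl⟩ := (segment_eq_Icc (ht.1.trans ht.2)).symm ▸ ht
  refine ⟨a, b, ha, hb, hab, Prod.ext rfl ?_⟩
  simp only [Prod.snd_add, Prod.smul_snd, smul_eq_mul, hm]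
  linear_combination (g lo - m * lo) * hab

lemma ConvexOn.le_secant {g : ℝ → ℝ} {lo hi m t : ℝ} (hg : ConvexOn ℝ (Icc lo hi) g)
    (hm : g hi = g lo + m * (hi - lo)) (ht : t ∈ Icc lo hi) :
    g t ≤ g lo + m * (t - lo) := by
  have hlo : lo ∈ Icc lo hi := left_mem_Icc.2 (ht.1.trans ht.2)
  have hhi : hi ∈ Icc lo hi := right_mem_Icc.2 (ht.1.trans ht.2)
  exact (hg.convex_epigraph.segment_subset ⟨hlo, le_rfl⟩ ⟨hhi, le_rfl⟩
    (mk_secant_mem_segment hm ht)).2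

theorem ConvexOn.convexHull_graph_Icc {g : ℝ → ℝ} {lo hi m : ℝ}
    (hg : ConvexOn ℝ (Icc lo hi) g) (hm : g hi = g lo + m * (hi - lo)) :
    convexHull ℝ {p : ℝ × ℝ | p.1 ∈ Icc lo hi ∧ p.2 = g p.1} =
      {p | p.1 ∈ Icc lo hi ∧ g p.1 ≤ p.2 ∧ p.2 ≤ g lo + m * (p.1 - lo)} := by
  set graph := {p : ℝ × ℝ | p.1 ∈ Icc lo hi ∧ p.2 = g p.1}
  have hregion : {p : ℝ × ℝ | p.1 ∈ Icc lo hi ∧ g p.1 ≤ p.2 ∧ p.2 ≤ g lo + m * (p.1 - lo)} =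
      {p | p.1 ∈ Icc lo hi ∧ g p.1 ≤ p.2} ∩ {p | p.2 ≤ g lo + m * (p.1 - lo)} := by
    ext p
    simp only [mem_ofPred_eq, mem_inter_iff, and_assoc]
  apply (convexHull_min _ _).antisymm
  · rintro ⟨t, y⟩ ⟨ht, hgy, hy⟩
    have hlo : lo ∈ Icc lo hi := left_mem_Icc.2 (ht.1.trans ht.2)
    have hhi : hi ∈ Icc lo hi := right_mem_Icc.2 (ht.1.trans ht.2)
    have hsecant : (t, g lo + m * (t - lo)) ∈ convexHull ℝ graph :=
      segment_subset_convexHull (s := graph) ⟨hlo, rfl⟩ ⟨hhi, rfl⟩ (mk_secant_mem_segment hm ht)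
    have hcurve : (t, g t) ∈ convexHull ℝ graph := subset_convexHull ℝ graph ⟨ht, rfl⟩
    have hvertical : (t, y) ∈ segment ℝ (t, g t) (t, g lo + m * (t - lo)) := by
      rw [← Prod.image_mk_segment_right, segment_eq_Icc (hgy.trans hy)]
      exact ⟨y, ⟨hgy, hy⟩, rfl⟩
    exact (convex_convexHull ℝ graph).segment_subset hcurve hsecant hvertical
  · rintro p ⟨ht, hp⟩
    exact ⟨ht, hp.ge, hp ▸ hg.le_secant hm ht⟩
  · rw [hregion]
    exact hg.convex_epigraph.inter (convex_setOf_snd_le_affine (g lo) m lo)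

def fixedFlowEmbedding (F : ℝ) : ℝ × ℝ →ᵃ[ℝ] ℝ × ℝ × ℝ × ℝ where
  toFun p := (F, p.1, p.2, F * p.1)
  linear := (0 : ℝ × ℝ →ₗ[ℝ] ℝ).prod ((LinearMap.fst ℝ ℝ ℝ).prod
    ((LinearMap.snd ℝ ℝ ℝ).prod (F • LinearMap.fst ℝ ℝ ℝ)))
  map_vadd' p v := by ext <;> simp [mul_add]

lemma image_fixedFlowEmbedding (F : ℝ) (s : Set (ℝ × ℝ)) :
    fixedFlowEmbedding F '' s = {q | q.1 = F ∧ q.2.2.2 = F * q.2.1 ∧ (q.2.1, q.2.2.1) ∈ s} := by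
  ext ⟨f, t, y, u⟩
  constructor
  · rintro ⟨p, hp, hq⟩
    simp only [fixedFlowEmbedding, AffineMap.coe_mk, Prod.mk.injEq] at hq
    obtain ⟨rfl, rfl, rfl, rfl⟩ := hq
    exact ⟨rfl, rfl, hp⟩
  · rintro ⟨rfl, hu : u = f * t, hs⟩
    exact ⟨(t, y), hs, by rw [hu]; rfl⟩

/-- The convex hull of the slice `S^c` of the Underwood-fraction set with the component
flow fixed at `F1` (coordinates `p = (f, θ, H, u)`): the hull lies between the convex
function `θ ↦ F1/(α1 − θ)` and its secant over `[θlo, α1 − F1/H1up]`. -/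
theorem stmt19 (tlo a1 F1 H1up : ℝ)
    (hF1 : 0 < F1) (hH : 0 < H1up) (htlo : tlo ≤ a1 - F1 / H1up) :
    convexHull ℝ
      {p : ℝ × ℝ × ℝ × ℝ |
        p.1 = F1 ∧ tlo ≤ p.2.1 ∧ p.2.1 ≤ a1 - F1 / H1up ∧
        p.2.2.1 = F1 / (a1 - p.2.1) ∧ p.2.2.2 = F1 * p.2.1} =
    {p : ℝ × ℝ × ℝ × ℝ |
      p.1 = F1 ∧ p.2.2.2 = F1 * p.2.1 ∧ tlo ≤ p.2.1 ∧ p.2.1 ≤ a1 - F1 / H1up ∧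
      F1 / (a1 - p.2.1) ≤ p.2.2.1 ∧
      p.2.2.1 ≤ F1 / (a1 - tlo) + H1up * (p.2.1 - tlo) / (a1 - tlo)} := by
  have hhi : a1 - F1 / H1up < a1 := sub_lt_self a1 (div_pos hF1 hH)
  have hg : ConvexOn ℝ (Icc tlo (a1 - F1 / H1up)) fun t => F1 / (a1 - t) :=
    (convexOn_div_sub hF1.le a1).subset (fun t ht => ht.2.trans_lt hhi) (convex_Icc _ _)
  have hslope : F1 / (a1 - (a1 - F1 / H1up)) =
      F1 / (a1 - tlo) + H1up / (a1 - tlo) * (a1 - F1 / H1up - tlo) := by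
    have : a1 - tlo ≠ 0 := by linarith
    rw [sub_sub_cancel, div_div_cancel₀ hF1.ne']
    field_simp
    ring
  have hhull := congrArg (fixedFlowEmbedding F1 '' ·) (hg.convexHull_graph_Icc hslope)
  simp only [AffineMap.image_convexHull, image_fixedFlowEmbedding] at hhull
  convert hhull using 2 <;> ext ⟨f, t, y, u⟩ <;> simp only [mem_ofPred_eq, mem_Icc]
  · tauto
  · rw [mul_div_right_comm]; tauto
end
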